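/- (Catalan's identity for k-Mersenne-Lucas numbers) For natural numbers n ≥ r, m_{k,n+r}·m_{k,n−r} − m_{k,n}² = 2^{n−r}·(λ₁^r − λ₂^r)², where λ₁, λ₂ are the roots of λ² − 3kλ + 2 = 0; equivalently, m_{k,n+r}·m_{k,n−r} − m_{k,n}² = 2^{n−r}·(9k²−8)·M_{k,r}². -/
import Mathlib


noncomputable def M (k : ℝ) : ℕ → ℝ
  | 0 => 0
  | 1 => 1
  | (n+2) => 3*k * M k (n+1) - 2 * M k n

noncomputable def m (k : ℝ) : ℕ → ℝ
  | 0 => 2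
  | 1 => 3*k
  | (n+2) => 3*k * m k (n+1) - 2 * m k n

lemma binet_aux (k a b : ℝ) (hsum : a + b = 3*k) (hprod : a * b = 2) :
    ∀ n : ℕ, m k n = a^n + b^n ∧ M k n * (a - b) = a^n - b^n := by
  have key : ∀ n : ℕ, (m k n = a^n + b^n ∧ M k n * (a - b) = a^n - b^n) ∧
      (m k (n+1) = a^(n+1) + b^(n+1) ∧ M k (n+1) * (a - b) = a^(n+1) - b^(n+1)) := by
    intro n
    induction n with
    | zero =>
      refine ⟨⟨by norm_num [m], by simp [M]⟩, ⟨by simp [m]; linarith, by simp [M]⟩⟩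
    | succ n ih =>
      refine ⟨ih.2, ?_, ?_⟩
      · show 3*k * m k (n+1) - 2 * m k n = _
        rw [ih.2.1, ih.1.1, ← hsum, ← hprod]; ring
      · show (3*k * M k (n+1) - 2 * M k n) * (a - b) = _
        have e1 := ih.2.2
        have e2 := ih.1.2
        rw [← hsum, ← hprod]
        linear_combination (a+b)*e1 - (a*b)*e2
  exact fun n => (key n).1

theorem kMersenneLucas_catalan (k : ℝ) (hk : 9*k^2 > 8)
    (lam1 lam2 : ℝ)
    (h1 : lam1 = (3*k + Real.sqrt (9*k^2 - 8))/2)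
    (h2 : lam2 = (3*k - Real.sqrt (9*k^2 - 8))/2)
    (n r : ℕ) (h : r ≤ n) :
    m k (n+r) * m k (n-r) - (m k n)^2 = 2^(n-r) * (lam1^r - lam2^r)^2 ∧
    m k (n+r) * m k (n-r) - (m k n)^2 = 2^(n-r) * (9*k^2 - 8) * (M k r)^2 := by
  set s := Real.sqrt (9*k^2 - 8) with hs
  have hs2 : s^2 = 9*k^2 - 8 := Real.sq_sqrt (by linarith)
  have hsum : lam1 + lam2 = 3*k := by rw [h1, h2]; ring
  have hprod : lam1 * lam2 = 2 := by rw [h1, h2]; nlinarith [hs2]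
  have hdiff : lam1 - lam2 = s := by rw [h1, h2]; ring
  have B := binet_aux k lam1 lam2 hsum hprod
  obtain ⟨a, rfl⟩ : ∃ a, n = a + r := ⟨n - r, (Nat.sub_add_cancel h).symm⟩
  have hnr : a + r - r = a := by omega
  have hpp : lam1^a * lam2^a = 2^a := by rw [← mul_pow, hprod]
  have main : m k (a+r+r) * m k a - (m k (a+r))^2
      = 2^a * (lam1^r - lam2^r)^2 := by
    rw [(B (a+r+r)).1, (B a).1, (B (a+r)).1]
    have e1 : lam1^(a+r+r) = lam1^a * lam1^r * lam1^r := by rw [← pow_add, ← pow_add]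
    have e2 : lam2^(a+r+r) = lam2^a * lam2^r * lam2^r := by rw [← pow_add, ← pow_add]
    have e3 : lam1^(a+r) = lam1^a * lam1^r := (pow_add _ _ _)
    have e4 : lam2^(a+r) = lam2^a * lam2^r := (pow_add _ _ _)
    rw [e1, e2, e3, e4]
    have hpr : lam1^r * lam2^r = 2^r := by rw [← mul_pow, hprod]
    nlinarith [hpp, hpr]
  constructor
  · rw [hnr]; exact main
  · rw [hnr]
    have hM : M k r * s = lam1^r - lam2^r := by rw [← hdiff]; exact (B r).2
    rw [main, ← hM, mul_pow, hs2]
    ring
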